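/- Let X₁,…,Xₙ ∈ Sym⁺(p) with sample SR mean set E_SR = argmin over S ∈ Sym⁺(p) of ∑ d_SR²(X_i,S) and sample PSR mean set E_PSR = argmin over (U,D) ∈ M(p) of ∑ d_PSR²(X_i,(U,D)). If E_SR is nonempty and contained in the set of SPD matrices with distinct eigenvalues, then E_PSR = F⁻¹(E_SR) and F(E_PSR) = E_SR. -/

import Mathlib

open scoped BigOperators
open Matrix

namespace SR

variable {p : ℕ}

/-- Frobenius norm of a matrix. -/
noncomputable def frobNorm (A : Matrix (Fin p) (Fin p) ℝ) : ℝ :=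
  Real.sqrt (∑ i, ∑ j, (A i j) ^ 2)

/-- `U` is a special orthogonal (rotation) matrix. -/
def IsSO (U : Matrix (Fin p) (Fin p) ℝ) : Prop :=
  U * Uᵀ = 1 ∧ U.det = 1

/-- `D` is diagonal with positive diagonal entries. -/
def IsDiagPos (D : Matrix (Fin p) (Fin p) ℝ) : Prop :=
  D.IsDiag ∧ ∀ i, 0 < D i i

/-- `X` is symmetric positive definite. -/
def IsSPD (X : Matrix (Fin p) (Fin p) ℝ) : Prop :=
  X.IsSymm ∧ X.PosDef

/-- Membership in the eigen-decomposition space `M(p) = SO(p) × Diag⁺(p)`. -/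
def IsM (m : Matrix (Fin p) (Fin p) ℝ × Matrix (Fin p) (Fin p) ℝ) : Prop :=
  IsSO m.1 ∧ IsDiagPos m.2

/-- The eigen-composition map `F(U, D) = U D Uᵀ`. -/
def Fmap (m : Matrix (Fin p) (Fin p) ℝ × Matrix (Fin p) (Fin p) ℝ) :
    Matrix (Fin p) (Fin p) ℝ := m.1 * m.2 * m.1ᵀ

/-- `m = (U, D)` is an eigen-decomposition of `X`. -/
def IsEigenDecomp (X : Matrix (Fin p) (Fin p) ℝ)
    (m : Matrix (Fin p) (Fin p) ℝ × Matrix (Fin p) (Fin p) ℝ) : Prop :=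
  IsM m ∧ Fmap m = X

/-- Geodesic distance on `SO(p)`: `(1/√2)‖Log (U₂ U₁ᵀ)‖_F`, where `Log` denotes a
minimal-Frobenius-norm skew-symmetric logarithm. -/
noncomputable def dSO (U₁ U₂ : Matrix (Fin p) (Fin p) ℝ) : ℝ :=
  sInf {x : ℝ | ∃ A : Matrix (Fin p) (Fin p) ℝ, Aᵀ = -A ∧
    NormedSpace.exp A = U₂ * U₁ᵀ ∧ x = (1 / Real.sqrt 2) * frobNorm A}

/-- Geodesic distance on `Diag⁺(p)`: `‖Log D₁ − Log D₂‖_F`. -/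
noncomputable def dDiag (D₁ D₂ : Matrix (Fin p) (Fin p) ℝ) : ℝ :=
  Real.sqrt (∑ i, (Real.log (D₁ i i) - Real.log (D₂ i i)) ^ 2)

/-- Geodesic distance on `M(p)` with weight `k` on the rotation part. -/
noncomputable def dM (k : ℝ)
    (m₁ m₂ : Matrix (Fin p) (Fin p) ℝ × Matrix (Fin p) (Fin p) ℝ) : ℝ :=
  Real.sqrt (k * (dSO m₁.1 m₂.1) ^ 2 + (dDiag m₁.2 m₂.2) ^ 2)

/-- Scaling-rotation distance between SPD matrices. -/
noncomputable def dSR (k : ℝ) (X Y : Matrix (Fin p) (Fin p) ℝ) : ℝ :=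
  sInf {x : ℝ | ∃ mX mY, IsEigenDecomp X mX ∧ IsEigenDecomp Y mY ∧ x = dM k mX mY}

/-- Partial scaling-rotation distance. -/
noncomputable def dPSR (k : ℝ) (X : Matrix (Fin p) (Fin p) ℝ)
    (m : Matrix (Fin p) (Fin p) ℝ × Matrix (Fin p) (Fin p) ℝ) : ℝ :=
  sInf {x : ℝ | ∃ mX, IsEigenDecomp X mX ∧ x = dM k mX m}

/-- `P` is a signed permutation matrix. -/
def IsSignedPermMatrix (P : Matrix (Fin p) (Fin p) ℝ) : Prop :=
  ∃ (π : Equiv.Perm (Fin p)) (ε : Fin p → ℝ),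
    (∀ i, ε i = 1 ∨ ε i = -1) ∧ ∀ i j, P i j = ε i * (if i = π j then 1 else 0)

/-- `P` is an even signed permutation matrix (an element of `G(p)`). -/
def IsEvenSignedPerm (P : Matrix (Fin p) (Fin p) ℝ) : Prop :=
  IsSignedPermMatrix P ∧ P.det = 1

/-- `β_{G(p)}`: the minimal rotation distance from the identity to a nonidentity
even signed permutation matrix. -/
noncomputable def betaG (p : ℕ) : ℝ :=
  sInf {x : ℝ | ∃ h : Matrix (Fin p) (Fin p) ℝ, IsEvenSignedPerm h ∧ h ≠ 1 ∧ x = dSO 1 h}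

/-- `S` has a repeated eigenvalue (belongs to a lower stratum). -/
def HasRepeatedEig (S : Matrix (Fin p) (Fin p) ℝ) : Prop :=
  ∃ m, IsEigenDecomp S m ∧ ¬ Function.Injective (fun i => m.2 i i)

/-- `S` has `p` distinct eigenvalues (belongs to the top stratum). -/
def HasDistinctEigs (S : Matrix (Fin p) (Fin p) ℝ) : Prop :=
  ∃ m, IsEigenDecomp S m ∧ Function.Injective (fun i => m.2 i i)

/-- `δ(S)`: scaling-rotation distance from `S` to the lower strata. -/
noncomputable def deltaFun (k : ℝ) (S : Matrix (Fin p) (Fin p) ℝ) : ℝ :=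
  sInf {x : ℝ | ∃ S', IsSPD S' ∧ HasRepeatedEig S' ∧ x = dSR k S S'}

/-- Diameter of `SO(p)` in the rotation distance. -/
noncomputable def diamSO (p : ℕ) : ℝ :=
  sSup {x : ℝ | ∃ U V : Matrix (Fin p) (Fin p) ℝ, IsSO U ∧ IsSO V ∧ x = dSO U V}

variable {n : ℕ}

/-- The sample scaling-rotation mean set. -/
def sampleESR (k : ℝ) (X : Fin n → Matrix (Fin p) (Fin p) ℝ) :
    Set (Matrix (Fin p) (Fin p) ℝ) :=
  {S | IsSPD S ∧ ∀ S' : Matrix (Fin p) (Fin p) ℝ, IsSPD S' →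
    ∑ i, (dSR k (X i) S) ^ 2 ≤ ∑ i, (dSR k (X i) S') ^ 2}

/-- The sample partial scaling-rotation mean set. -/
def sampleEPSR (k : ℝ) (X : Fin n → Matrix (Fin p) (Fin p) ℝ) :
    Set (Matrix (Fin p) (Fin p) ℝ × Matrix (Fin p) (Fin p) ℝ) :=
  {m | IsM m ∧ ∀ m' : Matrix (Fin p) (Fin p) ℝ × Matrix (Fin p) (Fin p) ℝ, IsM m' →
    ∑ i, (dPSR k (X i) m) ^ 2 ≤ ∑ i, (dPSR k (X i) m') ^ 2}

/-!
`F` maps `M(p)` onto `Sym⁺(p)` (spectral theorem, with one eigenvector negated if necessary to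
land in `SO(p)`), and `d_SR(X, F m) ≤ d_PSR(X, m)` always. If `S` has distinct eigenvalues, any
two eigen-decompositions of `S` differ by the right action `(U, D) ↦ (U h, hᵀ D h)` of an even
signed permutation `h`, because an orthogonal matrix intertwining a diagonal matrix with distinct
entries and another diagonal matrix must be a signed permutation. This action preserves `d_M`
and the fibres of `F`, so `d_PSR(X, m) = d_SR(X, F m)` on the top stratum. The two mean sets are
then compared through the objectives `f ≥ g ∘ F`, which agree over the minimizers of `g`.
-/

section minimizers
open Set
variable {α β γ : Type*} [Preorder γ]

theorem setOf_isMinOn_eq_preimage_of_le_comp {F : α → β} {A : Set α} {B T : Set β}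
    {f : α → γ} {g : β → γ} (hmaps : MapsTo F A B) (hsurj : SurjOn F A B)
    (hle : ∀ a ∈ A, g (F a) ≤ f a) (heq : ∀ a ∈ A, F a ∈ T → f a = g (F a))
    (hne : {b ∈ B | IsMinOn g B b}.Nonempty) (hT : {b ∈ B | IsMinOn g B b} ⊆ T) :
    {a ∈ A | IsMinOn f A a} = {a ∈ A | F a ∈ {b ∈ B | IsMinOn g B b}} ∧
      F '' {a ∈ A | IsMinOn f A a} = {b ∈ B | IsMinOn g B b} := by
  obtain ⟨_, hb₀, hmin₀⟩ := hne
  obtain ⟨a₀, ha₀, rfl⟩ := hsurj hb₀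
  have hset : {a ∈ A | IsMinOn f A a} = {a ∈ A | F a ∈ {b ∈ B | IsMinOn g B b}} := by
    ext a
    refine ⟨fun ⟨ha, hmin⟩ => ⟨ha, hmaps ha, fun b hb => ?_⟩,
      fun ⟨ha, hFa⟩ => ⟨ha, fun a' ha' => ?_⟩⟩
    · calc g (F a) ≤ f a := hle a ha
        _ ≤ f a₀ := hmin ha₀
        _ = g (F a₀) := heq a₀ ha₀ (hT ⟨hb₀, hmin₀⟩)
        _ ≤ g b := hmin₀ hb
    · calc f a = g (F a) := heq a ha (hT hFa)
        _ ≤ g (F a') := hFa.2 (hmaps ha')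
        _ ≤ f a' := hle a' ha'
  refine ⟨hset, ?_⟩
  rw [hset]
  exact (image_inter_preimage F A _).trans (inter_eq_right.mpr fun _ (hb : _ ∧ _) => hsurj hb.1)

end minimizers

namespace IsSignedPermMatrix
variable {P : Matrix (Fin p) (Fin p) ℝ}

lemma transpose (hP : IsSignedPermMatrix P) : IsSignedPermMatrix Pᵀ := by
  obtain ⟨π, ε, hε, hP⟩ := hP
  refine ⟨π⁻¹, fun i => ε (π i), fun i => hε (π i), fun i j => ?_⟩
  simp only [transpose_apply, hP, Equiv.Perm.eq_inv_iff_eq]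
  by_cases h : j = π i
  · rw [if_pos h, if_pos h.symm, h]
  · rw [if_neg h, if_neg (Ne.symm h), mul_zero, mul_zero]

lemma transpose_mul_self (hP : IsSignedPermMatrix P) : Pᵀ * P = 1 := by
  obtain ⟨π, ε, hε, hP⟩ := hP
  ext i j
  have hsq : ∀ a, ε a * ε a = 1 := fun a => mul_self_eq_one_iff.mpr (hε a)
  simp [mul_apply, hP, one_apply, π.injective.eq_iff, eq_comm, hsq]

lemma mul_transpose_self (hP : IsSignedPermMatrix P) : P * Pᵀ = 1 :=
  mul_eq_one_comm.mp hP.transpose_mul_self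

lemma exists_transpose_mul_diagonal_mul (hP : IsSignedPermMatrix P) :
    ∃ π : Equiv.Perm (Fin p), ∀ d : Fin p → ℝ, Pᵀ * diagonal d * P = diagonal (d ∘ π) := by
  obtain ⟨π, ε, hε, hP⟩ := hP
  refine ⟨π, fun d => ?_⟩
  ext i j
  have hsq : ∀ a x, ε a * x * ε a = x := fun a x => by rcases hε a with h | h <;> simp [h]
  by_cases hij : i = j <;>
    simp [mul_apply, hP, diagonal_apply, π.injective.eq_iff, eq_comm, hsq, hij]

end IsSignedPermMatrix

lemma IsEvenSignedPerm.transpose {h : Matrix (Fin p) (Fin p) ℝ} (hh : IsEvenSignedPerm h) :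
    IsEvenSignedPerm hᵀ :=
  ⟨hh.1.transpose, by rw [det_transpose, hh.2]⟩

lemma isSignedPermMatrix_of_transpose_mul_self_eq_one {h : Matrix (Fin p) (Fin p) ℝ}
    (horth : hᵀ * h = 1) (hsupp : ∀ i i' j, h i j ≠ 0 → h i' j ≠ 0 → i = i') :
    IsSignedPermMatrix h := by
  have hcol : ∀ j j', ∑ i, h i j * h i j' = if j = j' then 1 else 0 := fun j j' => by
    simpa [mul_apply, one_apply] using congrFun (congrFun horth j) j'
  have hexists : ∀ j, ∃ i, h i j ≠ 0 := fun j => by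
    by_contra! hzero
    simpa [hzero] using hcol j j
  choose π₀ hπ₀ using hexists
  have hzero : ∀ i j, i ≠ π₀ j → h i j = 0 := fun i j hi => by
    by_contra hne
    exact hi (hsupp _ _ _ hne (hπ₀ j))
  have hsum : ∀ j j', ∑ i, h i j * h i j' = h (π₀ j) j * h (π₀ j) j' :=
    fun j j' => Fintype.sum_eq_single _ fun i hi => by rw [hzero i j hi, zero_mul]
  have hinj : Function.Injective π₀ := fun j j' hjj' => by
    by_contra hne
    have hprod := (hsum j j').symm.trans (hcol j j')
    rw [if_neg hne] at hprod
    exact mul_ne_zero (hπ₀ j) (hjj' ▸ hπ₀ j') hprod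
  let π := Equiv.ofBijective π₀ hinj.bijective_of_finite
  have hππ₀ : ∀ i, π₀ (π.symm i) = i := π.apply_symm_apply
  refine ⟨π, fun i => h i (π.symm i), fun i => ?_, fun i j => ?_⟩
  · apply mul_self_eq_one_iff.mp
    simpa [hsum, hππ₀] using hcol (π.symm i) (π.symm i)
  · by_cases hij : i = π₀ j
    · simp [hij, π]
    · simp [hzero i j hij, hij, π]

lemma isSignedPermMatrix_of_diagonal_mul_eq_mul_diagonal {h : Matrix (Fin p) (Fin p) ℝ}
    {d₁ d₂ : Fin p → ℝ} (hd₁ : Function.Injective d₁) (horth : hᵀ * h = 1)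
    (hcomm : diagonal d₁ * h = h * diagonal d₂) : IsSignedPermMatrix h := by
  have heig : ∀ i j, h i j ≠ 0 → d₁ i = d₂ j := fun i j hij => by
    have := congrFun (congrFun hcomm i) j
    rw [diagonal_mul, mul_diagonal, mul_comm] at this
    exact mul_left_cancel₀ hij this
  exact isSignedPermMatrix_of_transpose_mul_self_eq_one horth fun i i' j hi hi' =>
    hd₁ ((heig i j hi).trans (heig i' j hi').symm)

/-- The right action of `G(p)` on `M(p)`; over matrices with distinct eigenvalues its orbits
are the fibres of `F`. -/
def rightAct (m : Matrix (Fin p) (Fin p) ℝ × Matrix (Fin p) (Fin p) ℝ)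
    (h : Matrix (Fin p) (Fin p) ℝ) : Matrix (Fin p) (Fin p) ℝ × Matrix (Fin p) (Fin p) ℝ :=
  (m.1 * h, hᵀ * m.2 * h)

section rightAct
variable {m m₁ m₂ : Matrix (Fin p) (Fin p) ℝ × Matrix (Fin p) (Fin p) ℝ}
  {h h' : Matrix (Fin p) (Fin p) ℝ}

lemma rightAct_rightAct : rightAct (rightAct m h) h' = rightAct m (h * h') := by
  simp only [rightAct, transpose_mul, Matrix.mul_assoc]

lemma rightAct_one : rightAct m 1 = m := by
  simp [rightAct]

lemma Fmap_rightAct (hh : h * hᵀ = 1) : Fmap (rightAct m h) = Fmap m := by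
  simp only [Fmap, rightAct, transpose_mul, Matrix.mul_assoc, ← Matrix.mul_assoc h hᵀ, hh,
    Matrix.one_mul]

lemma dSO_mul_right (hh : h * hᵀ = 1) (U₁ U₂ : Matrix (Fin p) (Fin p) ℝ) :
    dSO (U₁ * h) (U₂ * h) = dSO U₁ U₂ := by
  simp only [dSO, transpose_mul, Matrix.mul_assoc, ← Matrix.mul_assoc h hᵀ, hh, Matrix.one_mul]

lemma dDiag_conj (hh : IsSignedPermMatrix h) {D₁ D₂ : Matrix (Fin p) (Fin p) ℝ}
    (hD₁ : D₁.IsDiag) (hD₂ : D₂.IsDiag) : dDiag (hᵀ * D₁ * h) (hᵀ * D₂ * h) = dDiag D₁ D₂ := by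
  obtain ⟨π, hπ⟩ := hh.exists_transpose_mul_diagonal_mul
  rw [← hD₁.diagonal_diag, ← hD₂.diagonal_diag, hπ, hπ]
  simp only [dDiag, diagonal_apply_eq, Function.comp_apply]
  rw [Equiv.sum_comp π fun i => (Real.log (diag D₁ i) - Real.log (diag D₂ i)) ^ 2]

lemma dM_rightAct (hh : IsSignedPermMatrix h) (hm₁ : m₁.2.IsDiag) (hm₂ : m₂.2.IsDiag) (k : ℝ) :
    dM k (rightAct m₁ h) (rightAct m₂ h) = dM k m₁ m₂ := by
  simp only [dM, rightAct, dSO_mul_right hh.mul_transpose_self, dDiag_conj hh hm₁ hm₂]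

lemma IsDiagPos.conj (hh : IsSignedPermMatrix h) {D : Matrix (Fin p) (Fin p) ℝ}
    (hD : IsDiagPos D) : IsDiagPos (hᵀ * D * h) := by
  obtain ⟨π, hπ⟩ := hh.exists_transpose_mul_diagonal_mul
  rw [← hD.1.diagonal_diag, hπ]
  exact ⟨isDiag_diagonal _, fun i => by simpa using hD.2 (π i)⟩

lemma IsM.rightAct (hm : IsM m) (hh : IsEvenSignedPerm h) : IsM (rightAct m h) :=
  ⟨⟨by simp only [SR.rightAct, transpose_mul, Matrix.mul_assoc, ← Matrix.mul_assoc h hᵀ,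
      hh.1.mul_transpose_self, Matrix.one_mul, hm.1.1],
    by rw [SR.rightAct, det_mul, hm.1.2, hh.2, one_mul]⟩, hm.2.conj hh.1⟩

end rightAct

lemma exists_isSO_mul_diagonal_mul_transpose {U : Matrix (Fin p) (Fin p) ℝ} (hU : U * Uᵀ = 1)
    (d : Fin p → ℝ) : ∃ V, IsSO V ∧ V * diagonal d * Vᵀ = U * diagonal d * Uᵀ := by
  have hdet : U.det * U.det = 1 := by
    simpa only [det_mul, det_transpose, det_one] using congrArg det hU
  rcases mul_self_eq_one_iff.mp hdet with hdet | hdet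
  · exact ⟨U, ⟨hU, hdet⟩, rfl⟩
  have : Nonempty (Fin p) := by
    refine not_isEmpty_iff.mp fun _ => ?_
    norm_num [det_isEmpty] at hdet
  obtain ⟨i₀⟩ := this
  -- negating one column of `U` fixes the determinant without changing `U D Uᵀ`
  set s : Fin p → ℝ := fun i => if i = i₀ then -1 else 1
  have hs : ∀ i, s i * s i = 1 := fun i => by by_cases hi : i = i₀ <;> simp [s, hi]
  have hJ : diagonal s * (diagonal s)ᵀ = 1 := by
    simp [diagonal_transpose, diagonal_mul_diagonal, hs]
  refine ⟨U * diagonal s, ⟨?_, ?_⟩, ?_⟩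
  · rw [transpose_mul, Matrix.mul_assoc, ← Matrix.mul_assoc (diagonal s), hJ, Matrix.one_mul, hU]
  · simp [det_diagonal, hdet, s]
  · have hJd : diagonal s * diagonal d * (diagonal s)ᵀ = diagonal d := by
      rw [diagonal_transpose, diagonal_mul_diagonal, diagonal_mul_diagonal]
      congr 1
      ext i
      linear_combination d i * hs i
    conv_rhs => rw [← hJd]
    simp only [transpose_mul, Matrix.mul_assoc]

lemma exists_isEigenDecomp {X : Matrix (Fin p) (Fin p) ℝ} (hX : X.PosDef) :
    ∃ m, IsEigenDecomp X m := by
  have hU : (hX.1.eigenvectorUnitary : Matrix (Fin p) (Fin p) ℝ) *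
      (hX.1.eigenvectorUnitary : Matrix (Fin p) (Fin p) ℝ)ᵀ = 1 :=
    Unitary.mul_star_self_of_mem hX.1.eigenvectorUnitary.2
  obtain ⟨V, hV, hVX⟩ := exists_isSO_mul_diagonal_mul_transpose hU hX.1.eigenvalues
  refine ⟨(V, diagonal hX.1.eigenvalues), ⟨hV, isDiag_diagonal _, fun i => ?_⟩, ?_⟩
  · simpa using hX.eigenvalues_pos i
  · rw [Fmap, hVX]
    simpa [star_eq_conjTranspose] using hX.1.spectral_theorem.symm

lemma IsM.isSPD_Fmap {m : Matrix (Fin p) (Fin p) ℝ × Matrix (Fin p) (Fin p) ℝ} (hm : IsM m) :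
    IsSPD (Fmap m) := by
  have hD : m.2.PosDef := by
    rw [← hm.2.1.diagonal_diag]
    exact posDef_diagonal_iff.mpr hm.2.2
  have hFm : (Fmap m).PosDef := by
    simpa [Fmap] using hD.mul_mul_conjTranspose_same (B := m.1)
      (vecMul_injective_of_isUnit (IsUnit.of_mul_eq_one _ hm.1.1))
  exact ⟨isHermitian_iff_isSymm.mp hFm.1, hFm⟩

lemma IsEigenDecomp.exists_eq_rightAct {S : Matrix (Fin p) (Fin p) ℝ}
    {m₁ m₂ : Matrix (Fin p) (Fin p) ℝ × Matrix (Fin p) (Fin p) ℝ}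
    (h₁ : IsEigenDecomp S m₁) (h₂ : IsEigenDecomp S m₂)
    (hinj : Function.Injective fun i => m₁.2 i i) :
    ∃ h, IsEvenSignedPerm h ∧ m₂ = rightAct m₁ h := by
  obtain ⟨⟨⟨hU₁, hdet₁⟩, hD₁, -⟩, hS₁⟩ := h₁
  obtain ⟨⟨⟨hU₂, hdet₂⟩, hD₂, -⟩, hS₂⟩ := h₂
  have hU₁' : m₁.1ᵀ * m₁.1 = 1 := mul_eq_one_comm.mp hU₁
  have hU₂' : m₂.1ᵀ * m₂.1 = 1 := mul_eq_one_comm.mp hU₂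
  set h := m₁.1ᵀ * m₂.1 with hh
  have hmul : m₁.1 * h = m₂.1 := by rw [← Matrix.mul_assoc, hU₁, Matrix.one_mul]
  have horth : hᵀ * h = 1 := by
    simp only [h, transpose_mul, transpose_transpose, Matrix.mul_assoc,
      ← Matrix.mul_assoc m₁.1 m₁.1ᵀ, hU₁, Matrix.one_mul, hU₂']
  have hconj : hᵀ * m₁.2 * h = m₂.2 := by
    have : m₂.1ᵀ * (m₁.1 * m₁.2 * m₁.1ᵀ) * m₂.1 = m₂.1ᵀ * (m₂.1 * m₂.2 * m₂.1ᵀ) * m₂.1 := by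
      rw [Fmap] at hS₁ hS₂
      rw [hS₁, hS₂]
    simpa only [h, transpose_mul, transpose_transpose, Matrix.mul_assoc,
      ← Matrix.mul_assoc m₂.1ᵀ m₂.1, hU₂', Matrix.one_mul, Matrix.mul_one] using this
  have hcomm : diagonal (fun i => m₁.2 i i) * h = h * diagonal (fun i => m₂.2 i i) := by
    change diagonal m₁.2.diag * h = h * diagonal m₂.2.diag
    rw [hD₁.diagonal_diag, hD₂.diagonal_diag, ← hconj]
    simp only [← Matrix.mul_assoc, mul_eq_one_comm.mp horth, Matrix.one_mul]
  refine ⟨h, ⟨isSignedPermMatrix_of_diagonal_mul_eq_mul_diagonal hinj horth hcomm, ?_⟩, ?_⟩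
  · rw [hh, det_mul, det_transpose, hdet₁, hdet₂, one_mul]
  · rw [rightAct, hmul, hconj]

section distances
variable (k : ℝ) {X Y : Matrix (Fin p) (Fin p) ℝ}
  {m mX mY : Matrix (Fin p) (Fin p) ℝ × Matrix (Fin p) (Fin p) ℝ}

lemma dSR_nonneg : 0 ≤ dSR k X Y :=
  Real.sInf_nonneg fun _ ⟨_, _, _, _, hx⟩ => hx ▸ Real.sqrt_nonneg _

lemma dSR_le_dM (hmX : IsEigenDecomp X mX) (hmY : IsEigenDecomp Y mY) : dSR k X Y ≤ dM k mX mY :=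
  csInf_le ⟨0, by rintro _ ⟨_, _, _, _, rfl⟩; exact Real.sqrt_nonneg _⟩ ⟨mX, mY, hmX, hmY, rfl⟩

lemma dPSR_le_dM (hmX : IsEigenDecomp X mX) : dPSR k X m ≤ dM k mX m :=
  csInf_le ⟨0, by rintro _ ⟨_, _, rfl⟩; exact Real.sqrt_nonneg _⟩ ⟨mX, hmX, rfl⟩

lemma dSR_Fmap_le_dPSR (hX : X.PosDef) (hm : IsM m) : dSR k X (Fmap m) ≤ dPSR k X m := by
  obtain ⟨mX, hmX⟩ := exists_isEigenDecomp hX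
  refine le_csInf ⟨_, mX, hmX, rfl⟩ ?_
  rintro _ ⟨mX, hmX, rfl⟩
  exact dSR_le_dM k hmX ⟨hm, rfl⟩

lemma HasDistinctEigs.injective_diag {S : Matrix (Fin p) (Fin p) ℝ} (hS : HasDistinctEigs S)
    (hm : IsEigenDecomp S m) : Function.Injective fun i => m.2 i i := by
  obtain ⟨m₀, hm₀, hinj⟩ := hS
  obtain ⟨h, hh, rfl⟩ := hm₀.exists_eq_rightAct hm hinj
  obtain ⟨π, hπ⟩ := hh.1.exists_transpose_mul_diagonal_mul
  have hdiag : (rightAct m₀ h).2 = diagonal (m₀.2.diag ∘ π) := by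
    rw [← hπ, hm₀.1.2.1.diagonal_diag]
    rfl
  intro i j hij
  simp only [hdiag, diagonal_apply_eq, Function.comp_apply, diag_apply] at hij
  exact π.injective (hinj hij)

lemma dPSR_eq_dSR_Fmap (hX : X.PosDef) (hm : IsM m) (hS : HasDistinctEigs (Fmap m)) :
    dPSR k X m = dSR k X (Fmap m) := by
  refine le_antisymm ?_ (dSR_Fmap_le_dPSR k hX hm)
  obtain ⟨mX₀, hmX₀⟩ := exists_isEigenDecomp hX
  refine le_csInf ⟨_, mX₀, m, hmX₀, ⟨hm, rfl⟩, rfl⟩ ?_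
  rintro _ ⟨mX, mS, hmX, hmS, rfl⟩
  obtain ⟨h, hh, rfl⟩ := IsEigenDecomp.exists_eq_rightAct ⟨hm, rfl⟩ hmS
    (hS.injective_diag ⟨hm, rfl⟩)
  -- moving `mX` by `h⁻¹ = hᵀ` realizes `dM k mX (m · h)` as a term of the infimum for `dPSR`
  have hmX' : IsEigenDecomp X (rightAct mX hᵀ) :=
    ⟨hmX.1.rightAct hh.transpose,
      (Fmap_rightAct (by rw [transpose_transpose]; exact hh.1.transpose_mul_self)).trans hmX.2⟩
  have hdist : dM k (rightAct mX hᵀ) m = dM k mX (rightAct m h) := by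
    rw [← dM_rightAct hh.1 hmX'.1.2.1 hm.2.1, rightAct_rightAct, hh.1.transpose_mul_self,
      rightAct_one]
  exact hdist ▸ dPSR_le_dM k hmX'

end distances

lemma sampleESR_eq (k : ℝ) (X : Fin n → Matrix (Fin p) (Fin p) ℝ) :
    sampleESR k X = {S ∈ {S | IsSPD S} |
      IsMinOn (fun S => ∑ i, dSR k (X i) S ^ 2) {S | IsSPD S} S} := rfl

lemma sampleEPSR_eq (k : ℝ) (X : Fin n → Matrix (Fin p) (Fin p) ℝ) :
    sampleEPSR k X = {m ∈ {m | IsM m} |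
      IsMinOn (fun m => ∑ i, dPSR k (X i) m ^ 2) {m | IsM m} m} := rfl

theorem PSR_eq_SR_general (p : ℕ) (k : ℝ) (n : ℕ)
    (X : Fin n → Matrix (Fin p) (Fin p) ℝ) (hX : ∀ i, IsSPD (X i))
    (hne : (sampleESR k X).Nonempty)
    (htop : ∀ S ∈ sampleESR k X, HasDistinctEigs S) :
    sampleEPSR k X = {m | IsM m ∧ Fmap m ∈ sampleESR k X} ∧
      Fmap '' sampleEPSR k X = sampleESR k X := by
  rw [sampleESR_eq] at hne htop ⊢
  rw [sampleEPSR_eq]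
  refine setOf_isMinOn_eq_preimage_of_le_comp (T := {S | HasDistinctEigs S})
    (fun m hm => hm.isSPD_Fmap) (fun S hS => exists_isEigenDecomp hS.2)
    (fun m hm => ?_) (fun m hm hS => ?_) hne htop
  · exact Finset.sum_le_sum fun i _ =>
      pow_le_pow_left₀ (dSR_nonneg k) (dSR_Fmap_le_dPSR k (hX i).2 hm) 2
  · simp only [dPSR_eq_dSR_Fmap k (hX _).2 hm hS]

/-- if the sample SR mean set is nonempty and contained in the top
stratum, then the sample PSR mean set is exactly `F⁻¹(E_SR)` (within `M(p)`), and
`F(E_PSR) = E_SR`. -/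
theorem PSR_eq_SR (p : ℕ) (k : ℝ) (hk : 0 < k) (n : ℕ)
    (X : Fin n → Matrix (Fin p) (Fin p) ℝ) (hX : ∀ i, IsSPD (X i))
    (hne : (sampleESR k X).Nonempty)
    (htop : ∀ S ∈ sampleESR k X, HasDistinctEigs S) :
    sampleEPSR k X = {m | IsM m ∧ Fmap m ∈ sampleESR k X} ∧
      Fmap '' sampleEPSR k X = sampleESR k X :=
  PSR_eq_SR_general p k n X hX hne htop

end SR
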